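/- For every natural number n ≥ 1, it is not the case that G_{n+1} ≤ G_{n−1}. -/

import Mathlib

universe u

/-- Normal-play pre-games (removed from Mathlib; old Mathlib definition restated). -/
inductive SetTheory.PGame : Type (u + 1)
  | mk : ∀ α β : Type u, (α → SetTheory.PGame) → (β → SetTheory.PGame) → SetTheory.PGame

/-- The pre-game `0 = { | }`, as in old Mathlib. -/
instance SetTheory.PGame.instZero : Zero SetTheory.PGame :=
  ⟨SetTheory.PGame.mk PEmpty PEmpty PEmpty.elim PEmpty.elim⟩

/-- Combinatorial games over a poset `A` of atoms: either an atomic game `[a]` for an atom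
`a : A`, or a composite game `⟨L|R⟩` where `L` and `R` are nonempty families of games
(the left and right options). -/
inductive PoGame (A : Type u) : Type (u + 1) where
  | atom : A → PoGame A
  | mk : (xl xr : Type u) → (xl → PoGame A) → (xr → PoGame A) →
      Nonempty xl → Nonempty xr → PoGame A

namespace PoGame

variable {A : Type u}

/-- `G` is an atomic game. -/
def IsAtomic : PoGame A → Prop
  | atom _ => True
  | mk _ _ _ _ _ _ => False

/-- `G` is a left option of the game given as second argument. -/
def IsLeftOption (G : PoGame A) : PoGame A → Prop
  | atom _ => False
  | mk _ _ L _ _ _ => ∃ i, L i = G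

/-- `G` is a right option of the game given as second argument. -/
def IsRightOption (G : PoGame A) : PoGame A → Prop
  | atom _ => False
  | mk _ _ _ R _ _ => ∃ j, R j = G

section Order

variable [PartialOrder A]

mutual
  /-- `Le G H` is the relation `G ≤ H` on games over the poset `A`, defined by mutual
  recursion with `Lf` (the relation `G ⊲ H`): `G ≤ H` iff every left option `G^L`
  satisfies `G^L ⊲ H`, every right option `H^R` satisfies `G ⊲ H^R`, and if `G` or `H`
  is atomic then `G ⊲ H`. -/
  inductive Le : PoGame A → PoGame A → Prop
    | intro (G H : PoGame A)
        (hL : ∀ G', IsLeftOption G' G → Lf G' H)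
        (hR : ∀ H', IsRightOption H' H → Lf G H')
        (hA : IsAtomic G ∨ IsAtomic H → Lf G H) : Le G H

  /-- `Lf G H` is the relation `G ⊲ H` on games over the poset `A`: it holds iff some
  right option `G^R` satisfies `G^R ≤ H`, or some left option `H^L` satisfies `G ≤ H^L`,
  or `G = [a]` and `H = [b]` are atomic with `a ≤ b` in `A`. -/
  inductive Lf : PoGame A → PoGame A → Prop
    | rightOption (G H G' : PoGame A) (h : IsRightOption G' G) (hle : Le G' H) : Lf G H
    | leftOption (G H H' : PoGame A) (h : IsLeftOption H' H) (hle : Le G H') : Lf G H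
    | atom (a b : A) (hab : a ≤ b) : Lf (atom a) (atom b)
end

/-- Two games are equivalent if `G ≤ H` and `H ≤ G`. -/
def GEquiv (G H : PoGame A) : Prop := Le G H ∧ Le H G

/-- `G` is locally monotone if `G ≤ G^L` for every left option `G^L` and `G^R ≤ G` for
every right option `G^R`. -/
def LocallyMonotone (G : PoGame A) : Prop :=
  (∀ G', IsLeftOption G' G → Le G G') ∧ (∀ G', IsRightOption G' G → Le G' G)

/-- `G` is an option (left or right) of `H`. -/
def IsOption (G H : PoGame A) : Prop := IsLeftOption G H ∨ IsRightOption G H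

/-- `G` is a position of `H`: `H` itself, an option of `H`, an option of an option, etc. -/
def IsPosition (G H : PoGame A) : Prop := Relation.ReflTransGen IsOption G H

/-- `G` is monotone if every position of `G` is locally monotone. -/
def Monotone (G : PoGame A) : Prop := ∀ K, IsPosition K G → LocallyMonotone K

end Order

/-- The 5-element linearly ordered set `L5 = {-3, -2, -1, 0, 1}`. -/
abbrev L5 : Type := {a : ℤ // -3 ≤ a ∧ a ≤ 1}

/-- `G` has mean `C`: an atomic game `[a]` has mean `a`, and a composite game has mean `C`
iff every left option has mean `C + 1` and every right option has mean `C - 1`. -/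
def HasMean : PoGame L5 → ℤ → Prop
  | atom a, C => (a : ℤ) = C
  | mk _ _ L R _ _, C => (∀ i, HasMean (L i) (C + 1)) ∧ (∀ j, HasMean (R j) (C - 1))

/-- The game `⟨G | H⟩` with a single left option `G` and a single right option `H`. -/
def ofPair (G H : PoGame A) : PoGame A :=
  mk PUnit PUnit (fun _ => G) (fun _ => H) ⟨PUnit.unit⟩ ⟨PUnit.unit⟩

/-- `⋆ = ⟨-1 | -3⟩`. -/
def star : PoGame L5 := ofPair (atom ⟨-1, by norm_num⟩) (atom ⟨-3, by norm_num⟩)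

/-- `M(G) = ⟨1 | G⟩`. -/
def M (G : PoGame L5) : PoGame L5 := ofPair (atom ⟨1, by norm_num⟩) G

/-- `P(G) = ⟨G | -2⟩`. -/
def P (G : PoGame L5) : PoGame L5 := ofPair G (atom ⟨-2, by norm_num⟩)

/-- `P⋆(G) = ⟨G | ⋆⟩`. -/
def Pstar (G : PoGame L5) : PoGame L5 := ofPair G star

/-- `Pn n G = P G` if `n` is odd, `P⋆ G` if `n` is even. -/
def Pn (n : ℕ) (G : PoGame L5) : PoGame L5 := if Odd n then P G else Pstar G

/-- The sequence `G_0 = [0]`, `G_{n+1} = M (Pn n (G_n))`. -/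
def Gseq : ℕ → PoGame L5
  | 0 => atom ⟨0, by norm_num⟩
  | n + 1 => M (Pn n (Gseq n))

/-- The normal-play game obtained from a game over `L5` by replacing every atom by the
normal-play game `0 = { | }`, keeping the tree of left and right options. -/
def np : PoGame L5 → SetTheory.PGame.{0}
  | atom _ => 0
  | mk xl xr L R _ _ => SetTheory.PGame.mk xl xr (fun i => np (L i)) (fun j => np (R j))

end PoGame

/-!
Write `B k = Pn k (G k)`, so that `G (k+1) = ⟨1 | B k⟩` and `B k = ⟨G k | r k⟩` with
`r k = -2` for odd `k` and `r k = ⋆` for even `k`. Since every game involved has a single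
left and a single right option, `G a ≤ G (c+1)` forces `B (a-1) ≤ B c` or `G a ≤ G c`, and
`B a ≤ B b` forces `B (a-1) ≤ B b` or `G a ≤ G b`. Induction on the smaller index therefore
reduces `G a ≤ G b` and `B a ≤ B b` (for `b < a`) to `G a ≤ G 0`, refuted by `1 ⋪ 0`, and to
`B a ≤ B b` for `a`, `b` of opposite parity. The latter is refuted through the right options:
`-2` and `⋆ = ⟨-1 | -3⟩` are incomparable, and `B k ≤ -1` never holds because `G k ⊲ -1`
would need `B (k-1) ≤ -1`, down to `0 ≤ -1`.
-/

namespace PoGame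

section General

variable {A : Type u}

theorem isLeftOption_ofPair (X Y : PoGame A) : IsLeftOption X (ofPair X Y) := ⟨PUnit.unit, rfl⟩

theorem isRightOption_ofPair (X Y : PoGame A) : IsRightOption Y (ofPair X Y) :=
  ⟨PUnit.unit, rfl⟩

theorem eq_of_isLeftOption_ofPair {G X Y : PoGame A} (h : IsLeftOption G (ofPair X Y)) :
    G = X :=
  h.elim fun _ h => h.symm

theorem eq_of_isRightOption_ofPair {G X Y : PoGame A} (h : IsRightOption G (ofPair X Y)) :
    G = Y :=
  h.elim fun _ h => h.symm

variable [PartialOrder A]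

theorem Le.lf_of_isLeftOption {G H G' : PoGame A} (h : Le G H) (hG' : IsLeftOption G' G) :
    Lf G' H := by
  cases h with
  | intro _ _ hL _ _ => exact hL G' hG'

theorem Le.lf_of_isRightOption {G H H' : PoGame A} (h : Le G H) (hH' : IsRightOption H' H) :
    Lf G H' := by
  cases h with
  | intro _ _ _ hR _ => exact hR H' hH'

theorem lf_atom_atom_iff {a b : A} : Lf (atom a) (atom b) ↔ a ≤ b := by
  refine ⟨fun h => ?_, Lf.atom a b⟩
  cases h with
  | rightOption _ _ _ h _ => exact h.elim
  | leftOption _ _ _ h _ => exact h.elim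
  | atom _ _ hab => exact hab

theorem ofPair_lf_atom_iff {X Y : PoGame A} {b : A} :
    Lf (ofPair X Y) (atom b) ↔ Le Y (atom b) := by
  refine ⟨fun h => ?_, Lf.rightOption _ _ Y (isRightOption_ofPair X Y)⟩
  cases h with
  | rightOption _ _ _ h hle => rwa [eq_of_isRightOption_ofPair h] at hle
  | leftOption _ _ _ h _ => exact h.elim

theorem ofPair_lf_ofPair_iff {X Y Z W : PoGame A} :
    Lf (ofPair X Y) (ofPair Z W) ↔ Le Y (ofPair Z W) ∨ Le (ofPair X Y) Z := by
  refine ⟨fun h => ?_, fun h => h.elim (Lf.rightOption _ _ Y (isRightOption_ofPair X Y))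
    (Lf.leftOption _ _ Z (isLeftOption_ofPair Z W))⟩
  cases h with
  | rightOption _ _ _ h hle => exact .inl (eq_of_isRightOption_ofPair h ▸ hle)
  | leftOption _ _ _ h hle => exact .inr (eq_of_isLeftOption_ofPair h ▸ hle)

end General

theorem Gseq_succ (k : ℕ) :
    Gseq (k + 1) = ofPair (atom ⟨1, by norm_num⟩) (Pn k (Gseq k)) :=
  rfl

theorem Pn_eq_ofPair (n : ℕ) (G : PoGame L5) :
    Pn n G = ofPair G (if Odd n then atom ⟨-2, by norm_num⟩ else star) := by
  unfold Pn P Pstar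
  split_ifs <;> rfl

theorem not_lf_atom_atom {a b : L5} (h : b < a) : ¬ Lf (atom a) (atom b) :=
  lf_atom_atom_iff.not.mpr (not_le.mpr h)

theorem not_Gseq_lf_neg_one (k : ℕ) : ¬ Lf (Gseq k) (atom ⟨-1, by norm_num⟩) := by
  induction k with
  | zero => exact not_lf_atom_atom (by decide)
  | succ k ih =>
    rw [Gseq_succ, ofPair_lf_atom_iff, Pn_eq_ofPair]
    exact fun h => ih (h.lf_of_isLeftOption (isLeftOption_ofPair _ _))

theorem not_star_le_neg_two : ¬ Le star (atom ⟨-2, by norm_num⟩) := fun h =>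
  not_lf_atom_atom (by decide) (h.lf_of_isLeftOption (isLeftOption_ofPair _ _))

theorem not_neg_two_le_star : ¬ Le (atom ⟨-2, by norm_num⟩) star := fun h =>
  not_lf_atom_atom (by decide) (h.lf_of_isRightOption (isRightOption_ofPair _ _))

theorem not_Pn_le_Pn_of_even_of_odd {a b : ℕ} (ha : ¬ Odd a) (hb : Odd b) :
    ¬ Le (Pn a (Gseq a)) (Pn b (Gseq b)) := by
  rw [Pn_eq_ofPair, Pn_eq_ofPair, if_neg ha, if_pos hb]
  intro h
  exact not_star_le_neg_two (ofPair_lf_atom_iff.mp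
    (h.lf_of_isRightOption (isRightOption_ofPair _ _)))

theorem not_Pn_le_Pn_of_odd_of_even {a b : ℕ} (ha : Odd a) (hb : ¬ Odd b) :
    ¬ Le (Pn a (Gseq a)) (Pn b (Gseq b)) := by
  rw [Pn_eq_ofPair, Pn_eq_ofPair, if_pos ha, if_neg hb]
  intro h
  rcases ofPair_lf_ofPair_iff.mp (h.lf_of_isRightOption (isRightOption_ofPair _ _)) with
    h | h
  · exact not_neg_two_le_star h
  · exact not_Gseq_lf_neg_one a (h.lf_of_isLeftOption (isLeftOption_ofPair _ _))

theorem not_Pn_le_Pn_of_mod_two_ne {a b : ℕ} (h : a % 2 ≠ b % 2) :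
    ¬ Le (Pn a (Gseq a)) (Pn b (Gseq b)) := by
  rcases Nat.mod_two_eq_zero_or_one a with ha | ha
  · exact not_Pn_le_Pn_of_even_of_odd (Nat.not_odd_iff.mpr ha) (Nat.odd_iff.mpr (by omega))
  · exact not_Pn_le_Pn_of_odd_of_even (Nat.odd_iff.mpr ha) (Nat.not_odd_iff.mpr (by omega))

theorem not_Gseq_le_Gseq_zero {a : ℕ} (ha : a ≠ 0) : ¬ Le (Gseq a) (Gseq 0) := by
  obtain ⟨k, rfl⟩ := Nat.exists_eq_succ_of_ne_zero ha
  exact fun h => not_lf_atom_atom (by decide) (h.lf_of_isLeftOption (isLeftOption_ofPair _ _))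

theorem not_Pn_le_Pn_of_not_Gseq_le {a b : ℕ} (hba : b < a) (hG : ¬ Le (Gseq a) (Gseq b)) :
    ¬ Le (Pn a (Gseq a)) (Pn b (Gseq b)) := by
  by_cases hab : a % 2 = b % 2
  swap
  · exact not_Pn_le_Pn_of_mod_two_ne hab
  obtain ⟨k, rfl⟩ : ∃ k, a = k + 1 := ⟨a - 1, by omega⟩
  intro h
  have hlf := h.lf_of_isLeftOption (Pn_eq_ofPair _ _ ▸ isLeftOption_ofPair _ _)
  rw [Gseq_succ, Pn_eq_ofPair b, ofPair_lf_ofPair_iff, ← Pn_eq_ofPair, ← Gseq_succ] at hlf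
  rcases hlf with hB | hG'
  · exact not_Pn_le_Pn_of_mod_two_ne (by omega) hB
  · exact hG hG'

theorem not_Gseq_le_Gseq_of_lt {a b : ℕ} (hba : b < a) : ¬ Le (Gseq a) (Gseq b) := by
  induction b generalizing a with
  | zero => exact not_Gseq_le_Gseq_zero hba.ne'
  | succ c ih =>
    obtain ⟨k, rfl⟩ : ∃ k, a = k + 1 := ⟨a - 1, by omega⟩
    intro h
    have hlf := h.lf_of_isRightOption (isRightOption_ofPair _ _)
    rw [Gseq_succ, Pn_eq_ofPair c, ofPair_lf_ofPair_iff, ← Pn_eq_ofPair, ← Gseq_succ] at hlf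
    rcases hlf with hB | hG
    · exact not_Pn_le_Pn_of_not_Gseq_le (by omega) (ih (by omega)) hB
    · exact ih (by omega) hG

end PoGame

open PoGame in
/-- For every natural number `n ≥ 1`, it is not the case that `G_{n+1} ≤ G_{n-1}`. -/
theorem stmt_11 (n : ℕ) (hn : 1 ≤ n) : ¬ Le (Gseq (n + 1)) (Gseq (n - 1)) :=
  not_Gseq_le_Gseq_of_lt (by omega)
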